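/- For every 2×2 complex unitary U and every θ ∈ ℝ: 1 − C_{l1}(U ψ_θ ψ_θ† U†) ≤ max( C_{l1}(U E₀₀ U†), C_{l1}(U E₁₁ U†) ). That is, for qubit unitary operations the l1 cohering power is always at least the l1 de-cohering power: C_{l1}(U) ≥ D_{l1}(U). Equivalently, writing U = [[a,b],[−conj(b),conj(a)]] with |a|²+|b|² = 1 (up to phase), 2|a||b| ≥ 1 − ||a|² − |b|²|. -/

import Mathlib

open Matrix BigOperators ComplexOrder

/-- The l1-coherence of a matrix: the sum of the absolute values of its
off-diagonal entries. -/
noncomputable def Cl1 {n : ℕ} (A : Matrix (Fin n) (Fin n) ℂ) : ℝ :=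
  ∑ i, ∑ j, if i ≠ j then ‖A i j‖ else 0

/-- A density matrix: positive semidefinite with trace 1. -/
def IsDensity {n : ℕ} (ρ : Matrix (Fin n) (Fin n) ℂ) : Prop :=
  ρ.PosSemidef ∧ ρ.trace = 1

/-- A quantum operation (CPTP map) given by a finite family of Kraus operators. -/
def IsQuantumOp {n : ℕ} (Φ : Matrix (Fin n) (Fin n) ℂ → Matrix (Fin n) (Fin n) ℂ) : Prop :=
  ∃ (m : ℕ) (K : Fin m → Matrix (Fin n) (Fin n) ℂ),
    (∑ i, (K i)ᴴ * K i) = 1 ∧ ∀ ρ, Φ ρ = ∑ i, K i * ρ * (K i)ᴴ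

/-- The dephasing map `Δ`, keeping only the diagonal part of a matrix. -/
def Deph {n : ℕ} (A : Matrix (Fin n) (Fin n) ℂ) : Matrix (Fin n) (Fin n) ℂ :=
  Matrix.of fun i j => if i = j then A i j else 0

/-- The maximally coherent qubit state vector `(1/√2)(1, e^{iθ})`. -/
noncomputable def psi (θ : ℝ) : Fin 2 → ℂ :=
  ![1 / (Real.sqrt 2 : ℂ), Complex.exp (θ * Complex.I) / (Real.sqrt 2 : ℂ)]

/-- The outer product `w w†` of a vector with itself. -/
def outer {n : ℕ} (w : Fin n → ℂ) : Matrix (Fin n) (Fin n) ℂ :=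
  Matrix.vecMulVec w (star w)

/-- The qubit unitary `[[a, b], [-conj b, conj a]]`. -/
def Uab (a b : ℂ) : Matrix (Fin 2) (Fin 2) ℂ :=
  !![a, b; -(starRingEnd ℂ) b, (starRingEnd ℂ) a]

/-- The binary entropy (base 2), with the convention `0 · log 0 = 0`. -/
noncomputable def H (x : ℝ) : ℝ :=
  -(x * Real.logb 2 x) - (1 - x) * Real.logb 2 (1 - x)

/-! For a 2×2 unitary the rows and columns have unit norm, so `|U₁₀| = |U₀₁|` and `|U₁₁| = |U₀₀|`
and both cohering values equal `2|U₀₀||U₀₁|`. For `v = U ψ_θ` one has `|v₀|² + |v₁|² = 1`, and the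
orthogonality of the columns of `U` gives `|v₀|² - |v₁|² = 2 Re (U₀₀ conj (U₀₁ e^{iθ}))`. Hence
`1 - 2|v₀||v₁| = (|v₀| - |v₁|)² ≤ ||v₀|² - |v₁|²| ≤ 2|U₀₀||U₀₁|`. -/

open Complex ComplexConjugate

lemma one_sub_two_mul_le_abs_sq_sub_sq {x y : ℝ} (hx : 0 ≤ x) (hy : 0 ≤ y)
    (h : x ^ 2 + y ^ 2 = 1) : 1 - 2 * x * y ≤ |x ^ 2 - y ^ 2| :=
  calc 1 - 2 * x * y = |x - y| * |x - y| := by rw [abs_mul_abs_self, ← h]; ring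
    _ ≤ |x - y| * (x + y) := by
      gcongr
      exact abs_sub_le_of_nonneg_of_le hx (by linarith) hy (by linarith)
    _ = |x ^ 2 - y ^ 2| := by rw [sq_sub_sq, abs_mul, abs_of_nonneg (add_nonneg hx hy), mul_comm]

lemma sq_norm_add_mul_sub_sq_norm_add_mul {a b c d e : ℂ} (he : ‖e‖ = 1) (hc : ‖c‖ = ‖b‖)
    (hd : ‖d‖ = ‖a‖) (horth : conj a * b + conj c * d = 0) :
    ‖a + b * e‖ ^ 2 - ‖c + d * e‖ ^ 2 = 4 * (a * conj (b * e)).re := by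
  have hcd : c * conj d = -(a * conj b) := by
    have := congrArg conj horth
    simp only [map_add, map_mul, conj_conj, map_zero] at this
    linear_combination this
  have norm_add_sq (p q : ℂ) : ‖p + q‖ ^ 2 = ‖p‖ ^ 2 + ‖q‖ ^ 2 + 2 * (p * conj q).re := by
    simpa only [Complex.sq_norm] using normSq_add p q
  rw [norm_add_sq, norm_add_sq, norm_mul, norm_mul, he, hc, hd, map_mul, map_mul, ← mul_assoc,
    ← mul_assoc, hcd, neg_mul, neg_re]
  ring

lemma Cl1_fin_two (A : Matrix (Fin 2) (Fin 2) ℂ) : Cl1 A = ‖A 0 1‖ + ‖A 1 0‖ := by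
  simp [Cl1, Fin.sum_univ_two]

lemma Cl1_outer_fin_two (v : Fin 2 → ℂ) : Cl1 (outer v) = 2 * ‖v 0‖ * ‖v 1‖ := by
  simp only [Cl1_fin_two, outer, vecMulVec_apply, Pi.star_apply, norm_mul, norm_star]
  ring

lemma mul_single_mul_conjTranspose {n : ℕ} (U : Matrix (Fin n) (Fin n) ℂ) (i : Fin n) :
    U * single i i 1 * Uᴴ = outer (fun k => U k i) := by
  ext j k
  simp [outer, vecMulVec_apply, mul_apply, single, ite_and]

lemma sum_sq_norm_col_eq_one {n : ℕ} {U : Matrix (Fin n) (Fin n) ℂ} (hU : Uᴴ * U = 1)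
    (j : Fin n) : ∑ i, ‖U i j‖ ^ 2 = 1 := by
  have := congrFun (congrFun hU j) j
  simp only [mul_apply, conjTranspose_apply, one_apply_eq, RCLike.star_def, conj_mul'] at this
  exact_mod_cast this

lemma sum_sq_norm_row_eq_one {n : ℕ} {U : Matrix (Fin n) (Fin n) ℂ} (hU : U * Uᴴ = 1)
    (i : Fin n) : ∑ j, ‖U i j‖ ^ 2 = 1 := by
  have := congrFun (congrFun hU i) i
  simp only [mul_apply, conjTranspose_apply, one_apply_eq, RCLike.star_def, mul_conj'] at this
  exact_mod_cast this

lemma sum_sq_norm_mulVec {n : ℕ} {U : Matrix (Fin n) (Fin n) ℂ} (hU : Uᴴ * U = 1)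
    (v : Fin n → ℂ) : ∑ i, ‖(U *ᵥ v) i‖ ^ 2 = ∑ i, ‖v i‖ ^ 2 := by
  have h : star (U *ᵥ v) ⬝ᵥ (U *ᵥ v) = star v ⬝ᵥ v := by
    rw [star_mulVec, dotProduct_mulVec, vecMul_vecMul, hU, vecMul_one]
  simp only [dotProduct, Pi.star_apply, RCLike.star_def, conj_mul'] at h
  exact_mod_cast h

lemma sq_norm_psi (θ : ℝ) (i : Fin 2) : ‖psi θ i‖ ^ 2 = 1 / 2 := by
  fin_cases i <;> simp [psi, norm_exp_ofReal_mul_I]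

lemma mulVec_psi (U : Matrix (Fin 2) (Fin 2) ℂ) (θ : ℝ) (i : Fin 2) :
    (U *ᵥ psi θ) i = (U i 0 + U i 1 * exp (θ * I)) / (Real.sqrt 2 : ℂ) := by
  simp only [mulVec, dotProduct, Fin.sum_univ_two, psi, Matrix.cons_val_zero, Matrix.cons_val_one]
  ring

section Unitary

variable {U : Matrix (Fin 2) (Fin 2) ℂ}

lemma conj_mul_add_conj_mul_eq_zero (hU : Uᴴ * U = 1) :
    conj (U 0 0) * U 0 1 + conj (U 1 0) * U 1 1 = 0 := by
  simpa [mul_apply, Fin.sum_univ_two] using congrFun (congrFun hU 0) 1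

lemma norm_one_zero_eq_norm_zero_one (hU : Uᴴ * U = 1) (hU' : U * Uᴴ = 1) :
    ‖U 1 0‖ = ‖U 0 1‖ := by
  have hcol := sum_sq_norm_col_eq_one hU 0
  have hrow := sum_sq_norm_row_eq_one hU' 0
  simp only [Fin.sum_univ_two] at hcol hrow
  exact (sq_eq_sq₀ (norm_nonneg _) (norm_nonneg _)).1 (by linarith)

lemma norm_one_one_eq_norm_zero_zero (hU : Uᴴ * U = 1) (hU' : U * Uᴴ = 1) :
    ‖U 1 1‖ = ‖U 0 0‖ := by
  have hcol := sum_sq_norm_col_eq_one hU 1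
  have hrow := sum_sq_norm_row_eq_one hU' 0
  simp only [Fin.sum_univ_two] at hcol hrow
  exact (sq_eq_sq₀ (norm_nonneg _) (norm_nonneg _)).1 (by linarith)

lemma Cl1_mul_single_mul_conjTranspose_fin_two (hU : Uᴴ * U = 1) (hU' : U * Uᴴ = 1)
    (i : Fin 2) :
    Cl1 (U * single i i 1 * Uᴴ) = 2 * ‖U 0 0‖ * ‖U 0 1‖ := by
  rw [mul_single_mul_conjTranspose, Cl1_outer_fin_two]
  fin_cases i
  · simp [norm_one_zero_eq_norm_zero_one hU hU']
  · simp [norm_one_one_eq_norm_zero_zero hU hU']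
    ring

lemma abs_sq_norm_mulVec_psi_sub_le (hU : Uᴴ * U = 1) (hU' : U * Uᴴ = 1) (θ : ℝ) :
    |‖(U *ᵥ psi θ) 0‖ ^ 2 - ‖(U *ᵥ psi θ) 1‖ ^ 2| ≤ 2 * ‖U 0 0‖ * ‖U 0 1‖ := by
  have hdiff := sq_norm_add_mul_sub_sq_norm_add_mul (e := exp (θ * I)) (norm_exp_ofReal_mul_I θ)
    (norm_one_zero_eq_norm_zero_one hU hU') (norm_one_one_eq_norm_zero_zero hU hU')
    (conj_mul_add_conj_mul_eq_zero hU)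
  have hre := abs_re_le_norm (U 0 0 * conj (U 0 1 * exp (θ * I)))
  simp only [norm_mul, norm_conj, norm_exp_ofReal_mul_I, mul_one] at hre
  simp only [mulVec_psi, norm_div, div_pow, norm_real, Real.norm_eq_abs, sq_abs,
    Real.sq_sqrt zero_le_two, ← sub_div, hdiff, abs_div, abs_mul, abs_two]
  rw [abs_of_pos four_pos]
  linarith

lemma sq_norm_mulVec_psi_add (hU : Uᴴ * U = 1) (θ : ℝ) :
    ‖(U *ᵥ psi θ) 0‖ ^ 2 + ‖(U *ᵥ psi θ) 1‖ ^ 2 = 1 := by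
  have := sum_sq_norm_mulVec hU (psi θ)
  simp only [Fin.sum_univ_two, sq_norm_psi] at this
  linarith

end Unitary

theorem cohering_power_ge_decohering_power_l1_qubit :
    (∀ U : Matrix (Fin 2) (Fin 2) ℂ, Uᴴ * U = 1 → U * Uᴴ = 1 →
      ∀ θ : ℝ,
        1 - Cl1 (outer (U.mulVec (psi θ))) ≤
          max (Cl1 (U * Matrix.single (0 : Fin 2) 0 (1 : ℂ) * Uᴴ))
              (Cl1 (U * Matrix.single (1 : Fin 2) 1 (1 : ℂ) * Uᴴ))) ∧
    (∀ a b : ℂ, ‖a‖ ^ 2 + ‖b‖ ^ 2 = 1 →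
      1 - |‖a‖ ^ 2 - ‖b‖ ^ 2| ≤
        2 * ‖a‖ * ‖b‖) := by
  refine ⟨fun U hU hU' θ => ?_, fun a b hab => ?_⟩
  · rw [Cl1_outer_fin_two, Cl1_mul_single_mul_conjTranspose_fin_two hU hU',
      Cl1_mul_single_mul_conjTranspose_fin_two hU hU', max_self]
    have hdecoh := one_sub_two_mul_le_abs_sq_sub_sq (norm_nonneg _) (norm_nonneg _)
      (sq_norm_mulVec_psi_add hU θ)
    linarith [abs_sq_norm_mulVec_psi_sub_le hU hU' θ]
  · linarith [one_sub_two_mul_le_abs_sq_sub_sq (norm_nonneg a) (norm_nonneg b) hab]
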